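/- Let 0 < α < 1, Δτ > 0, k ∈ ℕ, and let t_j = j·Δτ for j = 0, …, k+1. Let f : [0, t_{k+1}] → ℝ, and let L be the continuous piecewise linear interpolant of f on the nodes t_0, …, t_{k+1} (i.e., L(t_j) = f(t_j) and L is affine on each [t_j, t_{j+1}]). Then the weighted integral of L is given exactly by the product trapezoidal quadrature: ∫₀^{t_{k+1}} (t_{k+1} − s)^{α−1} L(s) ds = ∑_{j=0}^{k+1} c_{j,k+1} f(t_j), where c_{0,k+1} = ((Δτ)^α/(α(α+1))) (k^{α+1} − (k − α)(k+1)^α), c_{j,k+1} = ((Δτ)^α/(α(α+1))) ((k−j+2)^{α+1} + (k−j)^{α+1} − 2(k−j+1)^{α+1}) for 1 ≤ j ≤ k, and c_{k+1,k+1} = (Δτ)^α/(α(α+1)). -/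

import Mathlib

/-
On the cell `[t_j, t_{j+1}]` the interpolant is affine, and the substitution `s = t_{k+1} - Δτ v`
maps the cell onto `[m, m + 1]` with `m = k - j`, pulling out the factor `Δτ ^ α`; what remains are
the elementary integrals of `v ^ (α - 1)` and `v ^ α`. Summing over the cells, each interior node
collects one weight from each of its two neighbouring cells, which produces `c_{j,k+1}`.
-/

open Real MeasureTheory

/-- The product-trapezoidal quadrature weights `c_{j,k+1}` used to discretize the
Riemann–Liouville-type integral `∫₀^τ (τ−ξ)^(α−1) g(ξ) dξ` on a uniform grid. -/
noncomputable def trapWeight (α Δτ : ℝ) (k j : ℕ) : ℝ :=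
  if j = 0 then
    (Δτ ^ α / (α * (α + 1))) *
      ((k : ℝ) ^ (α + 1) - ((k : ℝ) - α) * ((k : ℝ) + 1) ^ α)
  else if j = k + 1 then
    Δτ ^ α / (α * (α + 1))
  else
    (Δτ ^ α / (α * (α + 1))) *
      (((k : ℝ) - (j : ℝ) + 2) ^ (α + 1) + ((k : ℝ) - (j : ℝ)) ^ (α + 1) -
        2 * ((k : ℝ) - (j : ℝ) + 1) ^ (α + 1))

open Finset Set

lemma intervalIntegral.integral_eq_sum_range_of_eqOn {E : Type*} [NormedAddCommGroup E]
    [NormedSpace ℝ E] {μ : Measure ℝ} {F : ℝ → E} {G : ℕ → ℝ → E} {a : ℕ → ℝ} {n : ℕ}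
    (hG : ∀ j < n, IntervalIntegrable (G j) μ (a j) (a (j + 1)))
    (hFG : ∀ j < n, EqOn F (G j) (uIcc (a j) (a (j + 1)))) :
    ∫ x in a 0..a n, F x ∂μ = ∑ j ∈ range n, ∫ x in a j..a (j + 1), G j x ∂μ := by
  rw [← intervalIntegral.sum_integral_adjacent_intervals fun j hj =>
    ((hG j hj).congr ((hFG j hj).symm.mono uIoc_subset_uIcc))]
  exact sum_congr rfl fun j hj => intervalIntegral.integral_congr (hFG j (mem_range.mp hj))

lemma intervalIntegrable_sub_rpow_sub_one_mul {α : ℝ} (hα : 0 < α) (T a b : ℝ) {g : ℝ → ℝ}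
    (hg : Continuous g) :
    IntervalIntegrable (fun s => (T - s) ^ (α - 1) * g s) volume a b := by
  have hker := (intervalIntegral.intervalIntegrable_rpow' (a := T - a) (b := T - b)
    (by linarith : -1 < α - 1)).comp_sub_left T
  simp only [sub_sub_cancel] at hker
  exact hker.mul_continuousOn hg.continuousOn

lemma integral_rpow_sub_one_mul_affine {α a b : ℝ} (hα : 0 < α) (ha : 0 ≤ a) (hb : 0 ≤ b)
    (c d : ℝ) :
    ∫ v in a..b, v ^ (α - 1) * (c + d * v) =
      c * (b ^ α - a ^ α) / α + d * (b ^ (α + 1) - a ^ (α + 1)) / (α + 1) := by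
  have hα1 : -1 < α - 1 := by linarith
  have hα2 : -1 < α := by linarith
  have hsplit : EqOn (fun v => v ^ (α - 1) * (c + d * v)) (fun v => c * v ^ (α - 1) + d * v ^ α)
      (uIcc a b) := fun v hv => by
    have hv0 : 0 ≤ v := (le_min ha hb).trans hv.1
    have hpow : v ^ (α - 1) * v = v ^ α := by
      rw [← rpow_add_one' hv0 (by simpa using hα.ne'), sub_add_cancel]
    simp only
    linear_combination d * hpow
  rw [intervalIntegral.integral_congr hsplit,
    intervalIntegral.integral_add ((intervalIntegral.intervalIntegrable_rpow' hα1).const_mul c)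
      ((intervalIntegral.intervalIntegrable_rpow' hα2).const_mul d),
    intervalIntegral.integral_const_mul, intervalIntegral.integral_const_mul,
    integral_rpow (Or.inl hα1), integral_rpow (Or.inl hα2), sub_add_cancel]
  ring

/- With `s = t_{k+1} - Δτ v` the cell `[t_j, t_{j+1}]` becomes `[m, m + 1]`, `m = k - j`, and
`trapLeftWeight α m = ∫ v in m..m+1, v ^ (α - 1) * (v - m)`,
`trapRightWeight α m = ∫ v in m..m+1, v ^ (α - 1) * (m + 1 - v)`
are the weights of `f t_j` and `f t_{j+1}` in that cell. -/
noncomputable def trapLeftWeight (α m : ℝ) : ℝ :=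
  ((m + 1) ^ (α + 1) - m ^ (α + 1)) / (α + 1) - m * ((m + 1) ^ α - m ^ α) / α

noncomputable def trapRightWeight (α m : ℝ) : ℝ :=
  (m + 1) * ((m + 1) ^ α - m ^ α) / α - ((m + 1) ^ (α + 1) - m ^ (α + 1)) / (α + 1)

lemma integral_sub_rpow_sub_one_mul_interp {α h m a b T : ℝ} (hα : 0 < α) (hh : 0 < h)
    (hm : 0 ≤ m) (hb : a + h = b) (hT : a + (m + 1) * h = T) (y₀ y₁ : ℝ) :
    ∫ s in a..b, (T - s) ^ (α - 1) * (y₀ + (y₁ - y₀) * (s - a) / h) =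
      h ^ α * (trapLeftWeight α m * y₀ + trapRightWeight α m * y₁) := by
  subst hb hT
  set F := fun s => (a + (m + 1) * h - s) ^ (α - 1) * (y₀ + (y₁ - y₀) * (s - a) / h)
  have hchange := intervalIntegral.integral_comp_sub_mul F (a := m) (b := m + 1) hh.ne'
    (a + (m + 1) * h)
  rw [show a + (m + 1) * h - h * (m + 1) = a by ring,
    show a + (m + 1) * h - h * m = a + h by ring] at hchange
  have hscale : EqOn (fun v => F (a + (m + 1) * h - h * v))
      (fun v => h ^ (α - 1) * (v ^ (α - 1) * ((y₁ * (m + 1) - y₀ * m) + (y₀ - y₁) * v)))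
      (uIcc m (m + 1)) := fun v hv => by
    have hv0 : 0 ≤ v := (le_min hm (by linarith)).trans hv.1
    simp only [F, sub_sub_cancel, mul_rpow hh.le hv0]
    field_simp
    ring
  rw [eq_inv_smul_iff₀ hh.ne', intervalIntegral.integral_congr hscale,
    intervalIntegral.integral_const_mul,
    integral_rpow_sub_one_mul_affine hα hm (by linarith)] at hchange
  rw [← hchange, smul_eq_mul, ← mul_assoc, ← rpow_one_add' hh.le (by simpa using hα.ne'),
    add_sub_cancel, trapLeftWeight, trapRightWeight]
  ring

section trapWeight

variable {α Δτ : ℝ} {k : ℕ}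

lemma trapWeight_zero (hα : 0 < α) : trapWeight α Δτ k 0 = Δτ ^ α * trapLeftWeight α k := by
  have hk := Nat.cast_nonneg (α := ℝ) k
  rw [trapWeight, if_pos rfl, trapLeftWeight, rpow_add_one' hk (by positivity),
    rpow_add_one' (by positivity) (by positivity)]
  field_simp
  ring

lemma trapWeight_last (hα : 0 < α) :
    trapWeight α Δτ k (k + 1) = Δτ ^ α * trapRightWeight α 0 := by
  rw [trapWeight, if_neg k.succ_ne_zero, if_pos rfl, trapRightWeight,
    zero_rpow hα.ne', zero_rpow (by positivity), zero_add, one_rpow, one_rpow]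
  field_simp
  ring

lemma trapWeight_succ_of_lt (hα : 0 < α) {i : ℕ} (hi : i < k) :
    trapWeight α Δτ k (i + 1) =
      Δτ ^ α * (trapLeftWeight α ((k : ℝ) - (i + 1 : ℕ)) + trapRightWeight α ((k : ℝ) - i)) := by
  have hm : (0 : ℝ) ≤ k - (i + 1 : ℕ) := sub_nonneg.mpr (by exact_mod_cast hi)
  rw [trapWeight, if_neg i.succ_ne_zero, if_neg (by omega), trapLeftWeight, trapRightWeight]
  push_cast at hm ⊢
  rw [show (k : ℝ) - i = k - (i + 1) + 1 by ring]
  generalize (k : ℝ) - (i + 1) = m at hm ⊢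
  rw [show m + 1 + 1 = m + 2 by ring, rpow_add_one' hm (by positivity),
    rpow_add_one' (by linarith) (by positivity), rpow_add_one' (by linarith) (by positivity)]
  field_simp
  ring

lemma sum_trapWeight_mul (hα : 0 < α) (y : ℕ → ℝ) :
    ∑ j ∈ range (k + 2), trapWeight α Δτ k j * y j =
      ∑ j ∈ range (k + 1), Δτ ^ α *
        (trapLeftWeight α ((k : ℝ) - j) * y j + trapRightWeight α ((k : ℝ) - j) * y (j + 1)) := by
  simp only [mul_add, sum_add_distrib]
  rw [sum_range_succ', sum_range_succ, sum_range_succ' (fun j => _ * (_ * y j)),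
    sum_range_succ (fun j => _ * (_ * y (j + 1))), trapWeight_zero hα, trapWeight_last hα,
    sum_congr rfl fun i hi => by rw [trapWeight_succ_of_lt hα (mem_range.mp hi)]]
  simp only [Nat.cast_zero, sub_zero, sub_self, mul_add, add_mul, sum_add_distrib, mul_assoc]
  ring

end trapWeight

theorem product_trapezoidal_rule_general (α Δτ : ℝ) (hα : α ∈ Set.Ioo (0:ℝ) 1)
    (hΔτ : 0 < Δτ) (k : ℕ) (f L : ℝ → ℝ)
    (haffine : ∀ j : ℕ, j ≤ k →
      ∀ s ∈ Set.Icc ((j : ℝ) * Δτ) (((j : ℝ) + 1) * Δτ),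
        L s = f ((j : ℝ) * Δτ) +
          (f (((j : ℝ) + 1) * Δτ) - f ((j : ℝ) * Δτ)) * (s - (j : ℝ) * Δτ) / Δτ) :
    ∫ s in (0:ℝ)..(((k : ℝ) + 1) * Δτ),
        (((k : ℝ) + 1) * Δτ - s) ^ (α - 1) * L s =
      ∑ j ∈ Finset.range (k + 2), trapWeight α Δτ k j * f ((j : ℝ) * Δτ) := by
  have hsplit := intervalIntegral.integral_eq_sum_range_of_eqOn (μ := volume)
    (a := fun j : ℕ => (j : ℝ) * Δτ) (n := k + 1)
    (F := fun s => (((k : ℝ) + 1) * Δτ - s) ^ (α - 1) * L s)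
    (G := fun j s => (((k : ℝ) + 1) * Δτ - s) ^ (α - 1) *
      (f ((j : ℝ) * Δτ) + (f (((j : ℝ) + 1) * Δτ) - f ((j : ℝ) * Δτ)) * (s - (j : ℝ) * Δτ) / Δτ))
    (fun j _ => intervalIntegrable_sub_rpow_sub_one_mul hα.1 _ _ _ (by fun_prop))
    (fun j hj s hs => by
      rw [Set.uIcc_of_le (by gcongr; simp), Nat.cast_succ] at hs
      simp only [haffine j (by omega) s hs])
  simp only [Nat.cast_zero, zero_mul, Nat.cast_succ] at hsplit
  rw [hsplit, sum_trapWeight_mul hα.1]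
  refine sum_congr rfl fun j hj => ?_
  have hjk : (j : ℝ) ≤ k := by exact_mod_cast Nat.lt_succ_iff.mp (mem_range.mp hj)
  rw [integral_sub_rpow_sub_one_mul_interp hα.1 hΔτ (sub_nonneg.mpr hjk) (by ring) (by ring),
    Nat.cast_succ]

/-- The weighted integral of the piecewise linear interpolant `L` of `f` on the
uniform grid `t_j = jΔτ`, `j = 0, …, k+1`, equals the product trapezoidal
quadrature `∑_j c_{j,k+1} f(t_j)`. -/
theorem product_trapezoidal_rule (α Δτ : ℝ) (hα : α ∈ Set.Ioo (0:ℝ) 1)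
    (hΔτ : 0 < Δτ) (k : ℕ) (f L : ℝ → ℝ)
    (hnode : ∀ j : ℕ, j ≤ k + 1 → L ((j : ℝ) * Δτ) = f ((j : ℝ) * Δτ))
    (haffine : ∀ j : ℕ, j ≤ k →
      ∀ s ∈ Set.Icc ((j : ℝ) * Δτ) (((j : ℝ) + 1) * Δτ),
        L s = f ((j : ℝ) * Δτ) +
          (f (((j : ℝ) + 1) * Δτ) - f ((j : ℝ) * Δτ)) * (s - (j : ℝ) * Δτ) / Δτ) :
    ∫ s in (0:ℝ)..(((k : ℝ) + 1) * Δτ),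
        (((k : ℝ) + 1) * Δτ - s) ^ (α - 1) * L s =
      ∑ j ∈ Finset.range (k + 2), trapWeight α Δτ k j * f ((j : ℝ) * Δτ) :=
  product_trapezoidal_rule_general α Δτ hα hΔτ k f L haffine
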